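/- Let 𝔉 = 𝔉(X) be the free profinite group on a finite set X with |X| > 1. Then for any x ∈ X and any positive integer m, the centralizer C_𝔉(xᵐ) of xᵐ in 𝔉 coincides with the closure in 𝔉 of the cyclic subgroup ⟨x⟩. -/

import Mathlib

namespace CSP

/-! ### The profinite completion of a discrete group -/

/-- The index set for the profinite completion: finite-index normal subgroups. -/
abbrev FinQuot (G : Type*) [Group G] : Type _ :=
  {N : Subgroup G // N.Normal ∧ N.FiniteIndex}

variable (G : Type*) [Group G]

instance (N : FinQuot G) : (N.1).Normal := N.2.1

instance (N : FinQuot G) : TopologicalSpace (G ⧸ N.1) := ⊥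

instance (N : FinQuot G) : DiscreteTopology (G ⧸ N.1) := ⟨rfl⟩

instance (N : FinQuot G) : IsTopologicalGroup (G ⧸ N.1) where
  continuous_mul := continuous_of_discreteTopology
  continuous_inv := continuous_of_discreteTopology

/-- The diagonal homomorphism from `G` into the product of all of its finite quotients. -/
def toFinQuots : G →* (∀ N : FinQuot G, G ⧸ N.1) :=
  Pi.monoidHom fun N => QuotientGroup.mk' N.1

/-- The profinite completion of `G` as a subgroup of the product of the finite
quotients of `G`: the closure of the image of the diagonal map. -/
def profSubgroup : Subgroup (∀ N : FinQuot G, G ⧸ N.1) :=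
  (toFinQuots G).range.topologicalClosure

/-- The profinite completion of a (discrete) group `G`, as a topological group.
For `G = F(X)` a free group on a finite set `X`, this is the free profinite group
`𝔉(X)` on `X`. -/
abbrev ProfComp : Type _ := ↥(profSubgroup G)

/-- The canonical homomorphism from `G` to its profinite completion.  For a free
group this is the embedding of `F(X)` into the free profinite group `𝔉(X)`. -/
def unit : G →* ProfComp G :=
  (toFinQuots G).codRestrict _ fun g =>
    Subgroup.le_topologicalClosure _ (MonoidHom.mem_range.2 ⟨g, rfl⟩)

end CSP

/-! For a finite quotient `K = F/N` of `F = F(X)`, let `M` be the kernel of the Magnus-type map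
`F → (ℤ/(m+1))[K] ⋊ K` whose first component is the Fox derivative `∂/∂x` read in `K`. If `f`
commutes with `xᵐ` modulo `M`, comparing first components gives `v + f̄·σ = σ + x̄ᵐ·v` with
`σ = 1 + x̄ + ⋯ + x̄ᵐ⁻¹`. Summing coefficients over the right coset `⟨x̄ᵐ⟩f̄` kills `v`; what is
left counts between `1` and `m` terms on the left and none on the right unless `f̄ ∈ ⟨x̄⟩`.
Hence an element of `𝔉` centralizing `xᵐ` agrees with a power of `x` in every finite quotient,
i.e. lies in the closure of `⟨x⟩`. -/

open Finset

lemma mulAutArrow_mulSingle {K M : Type*} [Group K] [DecidableEq K] [Monoid M]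
    (k c : K) (g : M) : mulAutArrow k (Pi.mulSingle c g : K → M) = Pi.mulSingle (k * c) g := by
  ext b
  change (Pi.mulSingle c g : K → M) (k⁻¹ * b) = _
  simp only [Pi.mulSingle_apply, inv_mul_eq_iff_eq_mul]

section RightCosetProd

variable {K M : Type*} [Group K] [Fintype K] [CommMonoid M] (H : Subgroup K)
  [DecidablePred (· ∈ H)]

def rightCosetProd (k : K) : (K → M) →* M where
  toFun v := ∏ b ∈ univ with b * k⁻¹ ∈ H, v b
  map_one' := prod_const_one
  map_mul' _ _ := prod_mul_distrib

lemma rightCosetProd_mulAutArrow {h : K} (hh : h ∈ H) (k : K) (v : K → M) :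
    rightCosetProd H k (mulAutArrow h v) = rightCosetProd H k v := by
  refine prod_equiv (Equiv.mulLeft h⁻¹) (fun b => ?_) (fun _ _ => rfl)
  simp [mul_assoc, H.mul_mem_cancel_left (H.inv_mem hh)]

lemma rightCosetProd_mulSingle [DecidableEq K] (k c : K) (g : M) :
    rightCosetProd H k (Pi.mulSingle c g) = if c * k⁻¹ ∈ H then g else 1 := by
  simp [rightCosetProd, prod_pi_mulSingle']

end RightCosetProd

theorem mem_zpowers_of_mul_mulAutArrow_eq {K M : Type*} [Group K] [Finite K] [DecidableEq K]
    [CancelCommMonoid M] {a k : K} {g : M} {m : ℕ} (hm : 0 < m) (hg : m < orderOf g)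
    {v : K → M} (h : v * mulAutArrow k (∏ s ∈ range m, Pi.mulSingle (a ^ s) g)
      = (∏ s ∈ range m, Pi.mulSingle (a ^ s) g) * mulAutArrow (a ^ m) v) :
    k ∈ Subgroup.zpowers a := by
  classical
  have := Fintype.ofFinite K
  by_contra hk
  set H := Subgroup.zpowers (a ^ m)
  have key : (∏ s ∈ range m, if k * a ^ s * k⁻¹ ∈ H then g else 1)
      = ∏ s ∈ range m, if a ^ s * k⁻¹ ∈ H then g else 1 := by
    simpa only [map_mul, rightCosetProd_mulAutArrow H (Subgroup.mem_zpowers _), map_prod,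
      mulAutArrow_mulSingle, rightCosetProd_mulSingle, mul_comm (rightCosetProd H k v),
      mul_right_cancel_iff] using congrArg (rightCosetProd H k) h
  have hH : H ≤ Subgroup.zpowers a := Subgroup.zpowers_le.2 (Subgroup.npow_mem_zpowers a m)
  have hσ : ∀ s, a ^ s * k⁻¹ ∉ H := fun s hs => hk <| by
    simpa using (Subgroup.zpowers a).inv_mem <|
      (Subgroup.mul_mem_cancel_left _ (Subgroup.npow_mem_zpowers a s)).1 (hH hs)
  simp only [hσ, if_false, prod_const_one, prod_ite, prod_const, mul_one] at key
  refine pow_ne_one_of_lt_orderOf ?_ ((card_filter_le _ _).trans_lt ?_) key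
  · exact (card_pos.2 ⟨0, by simp [hm]⟩).ne'
  · simpa using hg

instance {N G : Type*} [Group N] [Group G] [Finite N] [Finite G] {φ : G →* MulAut N} :
    Finite (N ⋊[φ] G) :=
  Finite.of_equiv _ SemidirectProduct.equivProd.symm

section Magnus

variable {X K M : Type*} [DecidableEq X] [Group K] [DecidableEq K] [CommGroup M]

/-- The first component of the image of `f` is the Fox derivative `∂f/∂x`, pushed forward along
`ρ` and `1 ↦ g`. -/
def magnus (ρ : FreeGroup X →* K) (x : X) (g : M) : FreeGroup X →* (K → M) ⋊[mulAutArrow] K :=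
  FreeGroup.lift fun i => ⟨if i = x then Pi.mulSingle 1 g else 1, ρ (.of i)⟩

variable (ρ : FreeGroup X →* K) (x : X) (g : M)

lemma magnus_of (i : X) :
    magnus ρ x g (.of i) = ⟨if i = x then Pi.mulSingle 1 g else 1, ρ (.of i)⟩ :=
  FreeGroup.lift_apply_of

lemma magnus_right (f : FreeGroup X) : (magnus ρ x g f).right = ρ f := by
  have : SemidirectProduct.rightHom.comp (magnus ρ x g) = ρ :=
    FreeGroup.ext_hom _ _ fun i => by simp [magnus_of]
  exact DFunLike.congr_fun this f

lemma magnus_of_pow_left (n : ℕ) :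
    (magnus ρ x g (.of x ^ n)).left = ∏ s ∈ range n, Pi.mulSingle (ρ (.of x) ^ s) g := by
  induction n with
  | zero => rfl
  | succ n ih =>
    rw [pow_succ, map_mul, SemidirectProduct.mul_left, ih, magnus_right, prod_range_succ,
      magnus_of, if_pos rfl, mulAutArrow_mulSingle, mul_one, map_pow]

lemma mem_zpowers_of_commute_magnus [Finite K] {m : ℕ} (hm : 0 < m) (hg : m < orderOf g)
    {f : FreeGroup X} (h : Commute (magnus ρ x g f) (magnus ρ x g (.of x ^ m))) :
    ρ f ∈ Subgroup.zpowers (ρ (.of x)) := by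
  have h := congrArg SemidirectProduct.left h.eq
  rw [SemidirectProduct.mul_left, SemidirectProduct.mul_left, magnus_right, magnus_right,
    magnus_of_pow_left, map_pow] at h
  exact mem_zpowers_of_mul_mulAutArrow_eq hm hg h

end Magnus

namespace CSP

theorem exists_finQuot_le_of_commute_pow {X : Type*} (x : X) {m : ℕ} (hm : 0 < m)
    (N : FinQuot (FreeGroup X)) :
    ∃ M : FinQuot (FreeGroup X), M.1 ≤ N.1 ∧
      ∀ f : FreeGroup X, Commute (f : FreeGroup X ⧸ M.1) (FreeGroup.of x ^ m : FreeGroup X) →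
        (f : FreeGroup X ⧸ N.1) ∈ Subgroup.zpowers (FreeGroup.of x : FreeGroup X ⧸ N.1) := by
  classical
  have : N.1.FiniteIndex := N.2.2
  set φ := magnus (QuotientGroup.mk' N.1) x (Multiplicative.ofAdd (1 : ZMod (m + 1)))
  refine ⟨⟨φ.ker, inferInstance, inferInstance⟩, fun f hf => ?_, fun f hf => ?_⟩
  · have := congrArg SemidirectProduct.right (φ.mem_ker.1 hf)
    rwa [magnus_right, SemidirectProduct.one_right, QuotientGroup.mk'_apply,
      QuotientGroup.eq_one_iff] at this
  · have hg : m < orderOf (Multiplicative.ofAdd (1 : ZMod (m + 1))) := by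
      rw [orderOf_ofAdd_eq_addOrderOf, ZMod.addOrderOf_one]
      exact m.lt_succ_self
    exact mem_zpowers_of_commute_magnus _ _ _ hm hg
      (by simpa using hf.map (QuotientGroup.kerLift φ))

variable {G : Type*} [Group G]

lemma FinQuot.exists_le_of_finite {I : Set (FinQuot G)} (hI : I.Finite) :
    ∃ N₀ : FinQuot G, ∀ N ∈ I, N₀.1 ≤ N.1 :=
  have := hI.to_subtype
  ⟨⟨⨅ N : I, N.1.1, Subgroup.normal_iInf_normal fun N => N.1.2.1,
      Subgroup.finiteIndex_iInf fun N => N.1.2.2⟩,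
    fun N hN => iInf_le (fun N : I => N.1.1) ⟨N, hN⟩⟩

namespace ProfComp

def eval (N : FinQuot G) : ProfComp G →* G ⧸ N.1 :=
  (Pi.evalMonoidHom (fun N : FinQuot G => G ⧸ N.1) N).comp (profSubgroup G).subtype

lemma eval_unit (N : FinQuot G) (g : G) : eval N (unit G g) = g := rfl

lemma map_eval_of_le {M N : FinQuot G} (hMN : M.1 ≤ N.1) (g : ProfComp G) :
    QuotientGroup.map M.1 N.1 (MonoidHom.id G) hMN (eval M g) = eval N g := by
  let transition := (QuotientGroup.map M.1 N.1 (MonoidHom.id G) hMN).comp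
    (Pi.evalMonoidHom (fun N : FinQuot G => G ⧸ N.1) M)
  have hrange : (toFinQuots G).range ≤ transition.eqLocus (Pi.evalMonoidHom _ N) := by
    rintro _ ⟨a, rfl⟩
    rfl
  exact Subgroup.topologicalClosure_minimal _ hrange
    (isClosed_eq ((continuous_of_discreteTopology
      (f := QuotientGroup.map M.1 N.1 (MonoidHom.id G) hMN)).comp (continuous_apply M))
      (continuous_apply N))
    g.2

lemma eval_eq_of_le {M N : FinQuot G} (hMN : M.1 ≤ N.1) {g h : ProfComp G}
    (hgh : eval M g = eval M h) : eval N g = eval N h := by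
  rw [← map_eval_of_le hMN, hgh, map_eval_of_le]

lemma mem_closure_of_forall_exists_eval_eq {S : Set (ProfComp G)} {g : ProfComp G}
    (h : ∀ N : FinQuot G, ∃ s ∈ S, eval N s = eval N g) : g ∈ closure S := by
  rw [mem_closure_iff_nhds]
  intro U hU
  rw [nhds_subtype, Filter.mem_comap] at hU
  obtain ⟨V, hV, hVU⟩ := hU
  rw [nhds_pi, Filter.mem_pi] at hV
  obtain ⟨I, hI, t, ht, hIt⟩ := hV
  obtain ⟨N₀, hN₀⟩ := FinQuot.exists_le_of_finite hI
  obtain ⟨s, hs, hsg⟩ := h N₀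
  refine ⟨s, hVU (hIt fun N hN => ?_), hs⟩
  change eval N s ∈ t N
  rw [eval_eq_of_le (hN₀ N hN) hsg]
  exact mem_of_mem_nhds (ht N)

end ProfComp

open ProfComp

theorem centralizer_of_power_of_generator (X : Type) (x : X) (m : ℕ) (hm : 0 < m) :
    Subgroup.centralizer {(unit (FreeGroup X) (FreeGroup.of x)) ^ m}
      = (Subgroup.zpowers (unit (FreeGroup X) (FreeGroup.of x))).topologicalClosure := by
  set u := unit (FreeGroup X) (FreeGroup.of x)
  refine le_antisymm (fun g hg => ?_) ?_
  · have hcomm : Commute g (u ^ m) := Subgroup.mem_centralizer_singleton_iff.1 hg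
    rw [← SetLike.mem_coe, Subgroup.topologicalClosure_coe]
    refine mem_closure_of_forall_exists_eval_eq fun N => ?_
    obtain ⟨M, hMN, hM⟩ := exists_finQuot_le_of_commute_pow x hm N
    obtain ⟨f, hf⟩ := QuotientGroup.mk_surjective (eval M g)
    have hfx : Commute (f : FreeGroup X ⧸ M.1) (FreeGroup.of x ^ m : FreeGroup X) := by
      simpa [← hf, u, eval_unit] using hcomm.map (eval M)
    obtain ⟨t, ht⟩ := hM f hfx
    refine ⟨u ^ t, Subgroup.zpow_mem_zpowers u t, ?_⟩
    calc eval N (u ^ t) = ((FreeGroup.of x : FreeGroup X) : FreeGroup X ⧸ N.1) ^ t := by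
          rw [map_zpow, eval_unit]
      _ = eval N (unit (FreeGroup X) f) := ht
      _ = eval N g := eval_eq_of_le hMN hf
  · refine Subgroup.topologicalClosure_minimal _ ?_ (Set.isClosed_centralizer _)
    rw [Subgroup.zpowers_le]
    exact Subgroup.mem_centralizer_singleton_iff.2 (Commute.self_pow u m).eq

end CSP
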